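/- There exist a constant Γ > 0, a constant k > 0, a continuous nonnegative kernel K : [0,1] → [0,∞) which is differentiable at θ = 0 with K(0) = K'(0) = 0 and satisfies K(θ)/√(1−θ) → k as θ → 1⁻, points 0 < x₁ < x₂, and a continuous function ω : [0,x₂] → ℝ with ω > 0 on [0,x₁), ω(x₁) = 0, ω < 0 on (x₁,x₂), ω(x₂) = 0, such that: (a) ω(x) = Γ − x² ∫₀¹ K(θ) · 1_{ω(xθ) > 0} dθ for every x ∈ [0,x₂]; and (b) for every ε > 0 there is no continuous function ω̃ : [0, x₂+ε] → ℝ extending ω that satisfies ω̃(x) = Γ − x² ∫₀¹ K(θ) · 1_{ω̃(xθ) > 0} dθ for every x ∈ [0, x₂+ε] and is nonzero on (x₂, x₂+δ) for some δ ∈ (0,ε]. That is, degenerate solutions of the precipitation integral equation exist: the solution cannot be continued past the zero x₂ as a sign-definite ring pattern. -/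

import Mathlib

open MeasureTheory Set Filter Topology

/-!
Take Γ = 1 and a kernel `K` whose primitive `F t = ∫₀ᵗ K` equals `t²` on `[1/2, 3/4]` (there
`K θ = 2θ`), exceeds `t²` on `(3/4, 1)` and has `F 1 = 1`; near `0` and near `1` the kernel is bent
so that `K 0 = K' 0 = 0` and `K θ ~ 12 √(1 - θ)`. Then `ω x = 1 - x² F (min 1 (1/x))` solves the
equation on `[0, 4/3]`: it is positive on `[0, 1)`, negative on `(1, 4/3)` because `F (1/x) > 1/x²`,
and vanishes at `4/3` because `F (3/4) = (3/4)²`.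

Beyond `4/3` the integrand at `x` sees the ring `θ < 1/x`, the gap `(1/x, 4/(3x))` and the sign
of the continuation on `(4/(3x), 1)`, which is constant by the intermediate value theorem. As
`F (1/x) = 1/x²`, a negative continuation forces `ω x = 0`, and a positive one adds the positive
tail `∫_{4/(3x)}^1 K` and forces `ω x < 0`.
-/

theorem IsPreconnected.pos_or_neg_of_ne_zero {X : Type*} [TopologicalSpace X] {s : Set X}
    {f : X → ℝ} (hs : IsPreconnected s) (hf : ContinuousOn f s) (hne : ∀ x ∈ s, f x ≠ 0) :
    (∀ x ∈ s, 0 < f x) ∨ ∀ x ∈ s, f x < 0 := by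
  by_contra! h
  obtain ⟨⟨a, ha, hfa⟩, b, hb, hfb⟩ := h
  obtain ⟨c, hc, hfc⟩ := hs.intermediate_value ha hb hf ⟨hfa, hfb⟩
  exact hne c hc hfc

namespace intervalIntegral

variable {E : Type*} [NormedAddCommGroup E] [NormedSpace ℝ E]

theorem integral_eq_add_of_eqOn_Ioo {f g h : ℝ → E} {a t s b : ℝ}
    (hat : a ≤ t) (hts : t ≤ s) (hsb : s ≤ b)
    (hf : IntervalIntegrable f volume a t) (hh : IntervalIntegrable h volume s b)
    (hgf : EqOn g f (Ioo a t)) (hg0 : EqOn g 0 (Ioo t s)) (hgh : EqOn g h (Ioo s b)) :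
    ∫ x in a..b, g x = (∫ x in a..t, f x) + ∫ x in s..b, h x := by
  have hg₁ : IntervalIntegrable g volume a t := hf.congr_uIoo (uIoo_of_le hat ▸ hgf.symm)
  have hg₂ : IntervalIntegrable g volume t s :=
    (intervalIntegrable_const (c := (0 : E))).congr_uIoo (uIoo_of_le hts ▸ hg0.symm)
  have hg₃ : IntervalIntegrable g volume s b := hh.congr_uIoo (uIoo_of_le hsb ▸ hgh.symm)
  rw [← integral_add_adjacent_intervals (hg₁.trans hg₂) hg₃,
    ← integral_add_adjacent_intervals hg₁ hg₂, integral_congr_Ioo_of_le hat hgf,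
    integral_congr_Ioo_of_le hts hg0, integral_congr_Ioo_of_le hsb hgh]
  simp

end intervalIntegral

noncomputable def kernel (θ : ℝ) : ℝ :=
  if θ ≤ 1/2 then 12 * θ^2 - 16 * θ^3
  else if θ ≤ 3/4 then 2 * θ
  else √(1 - θ) * (12 - 18 * √(1 - θ))

noncomputable def kernelPrimitive (θ : ℝ) : ℝ :=
  if θ ≤ 1/2 then 4 * θ^3 - 4 * θ^4
  else if θ ≤ 3/4 then θ^2
  else θ^2 + 2 * (1 - θ) * (1 - 2 * √(1 - θ))^2

theorem sqrt_one_sub_three_quarters : √(1 - 3/4 : ℝ) = 1/2 := by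
  rw [Real.sqrt_eq_iff_eq_sq] <;> norm_num

theorem sqrt_one_sub_le_half {θ : ℝ} (h : 3/4 ≤ θ) : √(1 - θ) ≤ 1/2 := by
  rw [Real.sqrt_le_left] <;> linarith

theorem continuous_kernel : Continuous kernel := by
  refine Continuous.if_le (by fun_prop) (Continuous.if_le ?_ ?_ ?_ ?_ ?_) ?_ ?_ ?_ <;>
    try fun_prop
  · rintro θ rfl
    rw [sqrt_one_sub_three_quarters]; norm_num
  · rintro θ rfl
    norm_num

theorem continuous_kernelPrimitive : Continuous kernelPrimitive := by
  refine Continuous.if_le (by fun_prop) (Continuous.if_le ?_ ?_ ?_ ?_ ?_) ?_ ?_ ?_ <;>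
    try fun_prop
  · rintro θ rfl
    rw [sqrt_one_sub_three_quarters]; norm_num
  · rintro θ rfl
    norm_num

theorem kernel_nonneg (θ : ℝ) : 0 ≤ kernel θ := by
  unfold kernel
  split_ifs with h₁ h₂
  · nlinarith [sq_nonneg θ]
  · linarith
  · have := sqrt_one_sub_le_half (by linarith : 3/4 ≤ θ)
    have := Real.sqrt_nonneg (1 - θ)
    nlinarith

theorem kernel_pos {θ : ℝ} (hθ : θ ∈ Ioo (3/4 : ℝ) 1) : 0 < kernel θ := by
  rw [kernel, if_neg (by linarith [hθ.1]), if_neg (by linarith [hθ.1])]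
  have := sqrt_one_sub_le_half hθ.1.le
  have := Real.sqrt_pos.2 (sub_pos.2 hθ.2)
  nlinarith

theorem hasDerivAt_kernel_zero : HasDerivAt kernel 0 0 := by
  have hpoly : HasDerivAt (fun θ : ℝ => 12 * θ^2 - 16 * θ^3) 0 0 := by
    refine (((hasDerivAt_pow 2 0).const_mul 12).sub
      ((hasDerivAt_pow 3 0).const_mul 16)).congr_deriv ?_
    norm_num
  refine hpoly.congr_of_eventuallyEq ?_
  filter_upwards [Iio_mem_nhds (by norm_num : (0 : ℝ) < 1/2)] with θ hθ
  exact if_pos (le_of_lt hθ)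

theorem tendsto_kernel_div_sqrt :
    Tendsto (fun θ => kernel θ / √(1 - θ)) (𝓝[<] 1) (𝓝 12) := by
  have hlim : Tendsto (fun θ : ℝ => 12 - 18 * √(1 - θ)) (𝓝[<] 1) (𝓝 12) := by
    have : Continuous (fun θ : ℝ => 12 - 18 * √(1 - θ)) := by fun_prop
    simpa using (this.tendsto 1).mono_left nhdsWithin_le_nhds
  refine hlim.congr' ?_
  filter_upwards [Ioo_mem_nhdsLT (by norm_num : (3/4 : ℝ) < 1)] with θ hθ
  rw [kernel, if_neg (by linarith [hθ.1]), if_neg (by linarith [hθ.1]),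
    mul_div_cancel_left₀ _ (Real.sqrt_pos.2 (sub_pos.2 hθ.2)).ne']

theorem hasDerivAt_kernelPrimitive {θ : ℝ} (h1 : θ < 1) (h12 : θ ≠ 1/2) (h34 : θ ≠ 3/4) :
    HasDerivAt kernelPrimitive (kernel θ) θ := by
  rcases lt_or_gt_of_ne h12 with hθ | hθ
  · rw [kernel, if_pos hθ.le]
    refine HasDerivAt.congr_of_eventuallyEq ?_
      (eventually_of_mem (Iio_mem_nhds hθ) fun y hy => if_pos (le_of_lt hy))
    refine (((hasDerivAt_pow 3 θ).const_mul 4).sub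
      ((hasDerivAt_pow 4 θ).const_mul 4)).congr_deriv ?_
    ring
  rcases lt_or_gt_of_ne h34 with hθ' | hθ'
  · rw [kernel, if_neg (not_le.2 hθ), if_pos hθ'.le]
    refine HasDerivAt.congr_of_eventuallyEq ?_
      (eventually_of_mem (Ioo_mem_nhds hθ hθ') fun y hy => by
        rw [kernelPrimitive, if_neg (not_le.2 hy.1), if_pos hy.2.le])
    exact (hasDerivAt_pow 2 θ).congr_deriv (by ring)
  · rw [kernel, if_neg (by linarith), if_neg (not_le.2 hθ')]
    refine HasDerivAt.congr_of_eventuallyEq ?_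
      (eventually_of_mem (Ioi_mem_nhds hθ') fun y hy => by
        rw [kernelPrimitive, if_neg (by linarith [mem_Ioi.1 hy]), if_neg (not_le.2 hy)])
    have hpos : 0 < 1 - θ := sub_pos.2 h1
    have hu : HasDerivAt (fun y : ℝ => 1 - y) (-1) θ := by
      simpa using (hasDerivAt_id θ).const_sub 1
    have hr := hu.sqrt hpos.ne'
    have hr0 : √(1 - θ) ≠ 0 := (Real.sqrt_pos.2 hpos).ne'
    refine ((hasDerivAt_pow 2 θ).add ((hu.const_mul 2).mul
      ((hr.const_mul 2).const_sub 1 |>.pow 2))).congr_deriv ?_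
    simp only [Pi.pow_apply]
    field_simp
    have := Real.sq_sqrt hpos.le
    linear_combination (10 * √(1 - θ) - 4) * this

theorem integral_kernel {a b : ℝ} (hab : a ≤ b) (hb : b ≤ 1) :
    ∫ θ in a..b, kernel θ = kernelPrimitive b - kernelPrimitive a := by
  refine integral_eq_of_hasDerivAt_off_countable_of_le _ _ hab
    (s := {1/2, 3/4}) ((countable_singleton _).insert _) continuous_kernelPrimitive.continuousOn
    (fun θ hθ => ?_) (continuous_kernel.intervalIntegrable a b)
  simp only [Set.mem_sdiff, mem_insert_iff, mem_singleton_iff, not_or] at hθ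
  exact hasDerivAt_kernelPrimitive (hθ.1.2.trans_le hb) hθ.2.1 hθ.2.2

theorem kernelPrimitive_zero : kernelPrimitive 0 = 0 := by
  norm_num [kernelPrimitive]

theorem kernelPrimitive_one : kernelPrimitive 1 = 1 := by
  norm_num [kernelPrimitive]

theorem kernelPrimitive_eq_sq {t : ℝ} (ht : t ∈ Icc (1/2 : ℝ) (3/4)) : kernelPrimitive t = t^2 := by
  unfold kernelPrimitive
  split_ifs with h₁ h₂
  · rw [le_antisymm h₁ ht.1]; norm_num
  · rfl
  · exact absurd ht.2 h₂

theorem sq_lt_kernelPrimitive {t : ℝ} (ht : t ∈ Ioo (3/4 : ℝ) 1) : t^2 < kernelPrimitive t := by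
  rw [kernelPrimitive, if_neg (by linarith [ht.1]), if_neg (not_le.2 ht.1)]
  have hr : √(1 - t) < 1/2 := by
    rw [Real.sqrt_lt' (by norm_num)]; linarith [ht.1]
  have : 0 < 2 * (1 - t) * (1 - 2 * √(1 - t))^2 :=
    mul_pos (mul_pos two_pos (sub_pos.2 ht.2)) (pow_pos (by linarith) 2)
  linarith

-- `(max 1 x)⁻¹ = min 1 (1/x)` for `x > 0`, and this form is also continuous at `x = 0`.
noncomputable def solution (x : ℝ) : ℝ := 1 - x^2 * kernelPrimitive (max 1 x)⁻¹

theorem solution_of_le_one {x : ℝ} (hx : x ≤ 1) : solution x = 1 - x^2 := by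
  rw [solution, max_eq_left hx, inv_one, kernelPrimitive_one, mul_one]

theorem solution_of_one_le {x : ℝ} (hx : 1 ≤ x) :
    solution x = 1 - x^2 * kernelPrimitive (1 / x) := by
  rw [solution, max_eq_right hx, one_div]

theorem continuous_solution : Continuous solution :=
  continuous_const.sub <| (continuous_pow 2).mul <| continuous_kernelPrimitive.comp <|
    (continuous_const.max continuous_id).inv₀ fun x => (one_pos.trans_le (le_max_left 1 x)).ne'

theorem solution_pos {x : ℝ} (hx : x ∈ Ico (0 : ℝ) 1) : 0 < solution x := by
  rw [solution_of_le_one hx.2.le]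
  nlinarith [hx.1, hx.2]

theorem solution_neg {x : ℝ} (hx : x ∈ Ioo (1 : ℝ) (4/3)) : solution x < 0 := by
  have hx0 : 0 < x := one_pos.trans hx.1
  have ht : 1 / x ∈ Ioo (3/4 : ℝ) 1 :=
    ⟨by rw [lt_div_iff₀ hx0]; linarith [hx.2], by rw [div_lt_one hx0]; exact hx.1⟩
  rw [solution_of_one_le hx.1.le]
  calc 1 - x^2 * kernelPrimitive (1 / x) < 1 - x^2 * (1 / x)^2 := by
        gcongr; exact sq_lt_kernelPrimitive ht
    _ = 0 := by field_simp; ring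

theorem solution_one : solution 1 = 0 := by
  rw [solution_of_le_one le_rfl]; norm_num

theorem solution_four_thirds : solution (4/3) = 0 := by
  rw [solution_of_one_le (by norm_num), kernelPrimitive_eq_sq (by norm_num)]
  norm_num

theorem solution_eq_integral {x : ℝ} (hx : x ∈ Icc (0 : ℝ) (4/3)) :
    solution x =
      1 - x^2 * ∫ θ in (0 : ℝ)..1, kernel θ * (if 0 < solution (x * θ) then (1 : ℝ) else 0) := by
  have hm : 0 < max 1 x := one_pos.trans_le (le_max_left 1 x)
  have hc0 : 0 ≤ (max 1 x)⁻¹ := inv_nonneg.2 hm.le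
  have hc1 : (max 1 x)⁻¹ ≤ 1 := inv_le_one_of_one_le₀ (le_max_left 1 x)
  rw [intervalIntegral.integral_eq_add_of_eqOn_Ioo hc0 hc1 le_rfl
    (continuous_kernel.intervalIntegrable _ _) (intervalIntegrable_const (c := (0 : ℝ))),
    integral_kernel hc0 hc1, kernelPrimitive_zero, intervalIntegral.integral_same, sub_zero,
    add_zero, solution]
  · intro θ hθ
    have h1 : x * θ < 1 := calc
      x * θ ≤ max 1 x * θ := mul_le_mul_of_nonneg_right (le_max_right 1 x) hθ.1.le
      _ < max 1 x * (max 1 x)⁻¹ := mul_lt_mul_of_pos_left hθ.2 hm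
      _ = 1 := mul_inv_cancel₀ hm.ne'
    simp only [if_pos (solution_pos ⟨mul_nonneg hx.1 hθ.1.le, h1⟩), mul_one]
  · intro θ hθ
    have h1 : 1 < max θ (x * θ) := calc
      1 = max 1 x * (max 1 x)⁻¹ := (mul_inv_cancel₀ hm.ne').symm
      _ < max 1 x * θ := mul_lt_mul_of_pos_left hθ.1 hm
      _ = max θ (x * θ) := by rw [max_mul_of_nonneg _ _ (hc0.trans hθ.1.le), one_mul]
    have h2 : 1 < x * θ := (lt_max_iff.1 h1).resolve_left (not_lt.2 hθ.2.le)
    have h3 : x * θ < 4/3 := calc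
      x * θ ≤ max 1 x * θ := mul_le_mul_of_nonneg_right (le_max_right 1 x) (hc0.trans hθ.1.le)
      _ < max 1 x := mul_lt_of_lt_one_right hm hθ.2
      _ ≤ 4/3 := max_le (by norm_num) hx.2
    simp only [if_neg (not_lt.2 (solution_neg ⟨h2, h3⟩).le), mul_zero, Pi.zero_apply]
  · rw [Ioo_self]; exact eqOn_empty _ _

theorem integral_kernel_mul_continuation {ω h : ℝ → ℝ} {x : ℝ} (hx : x ∈ Ioc (4/3 : ℝ) (3/2))
    (hω : EqOn ω solution (Icc 0 (4/3))) (hh : IntervalIntegrable h volume (4/3/x) 1)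
    (htail : EqOn (fun θ => kernel θ * if 0 < ω (x * θ) then (1 : ℝ) else 0) h (Ioo (4/3/x) 1)) :
    ∫ θ in (0 : ℝ)..1, kernel θ * (if 0 < ω (x * θ) then (1 : ℝ) else 0) =
      (1 / x)^2 + ∫ θ in (4/3/x)..1, h θ := by
  have hx0 : 0 < x := by linarith [hx.1]
  have hinv : 1 / x ∈ Icc (1/2 : ℝ) (3/4) :=
    ⟨by rw [le_div_iff₀ hx0]; linarith [hx.2], by rw [div_le_iff₀ hx0]; linarith [hx.1]⟩
  have hts : 1 / x ≤ 4/3/x := by gcongr; norm_num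
  have hs1 : 4/3/x ≤ 1 := by rw [div_le_one hx0]; exact hx.1.le
  rw [intervalIntegral.integral_eq_add_of_eqOn_Ioo (by positivity) hts hs1
    (continuous_kernel.intervalIntegrable _ _) hh _ _ htail,
    integral_kernel (by positivity) (hts.trans hs1), kernelPrimitive_zero, sub_zero,
    kernelPrimitive_eq_sq hinv]
  · intro θ hθ
    have h0 : 0 ≤ x * θ := mul_nonneg hx0.le hθ.1.le
    have h1 : x * θ < 1 := (lt_div_iff₀' hx0).1 hθ.2
    simp only [hω ⟨h0, by linarith⟩, if_pos (solution_pos ⟨h0, h1⟩), mul_one]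
  · intro θ hθ
    have h1 : 1 < x * θ := (div_lt_iff₀' hx0).1 hθ.1
    have h2 : x * θ < 4/3 := (lt_div_iff₀' hx0).1 hθ.2
    simp only [hω ⟨by linarith, h2.le⟩, if_neg (not_lt.2 (solution_neg ⟨h1, h2⟩).le), mul_zero,
      Pi.zero_apply]

theorem solution_not_continuable {ε δ : ℝ} {ω : ℝ → ℝ} (hcont : ContinuousOn ω (Icc 0 (4/3 + ε)))
    (hext : EqOn ω solution (Icc 0 (4/3)))
    (heq : ∀ x ∈ Icc (0 : ℝ) (4/3 + ε),
      ω x = 1 - x^2 * ∫ θ in (0 : ℝ)..1, kernel θ * (if 0 < ω (x * θ) then (1 : ℝ) else 0))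
    (hδ : δ ∈ Ioc 0 ε) (hne : ∀ x ∈ Ioo (4/3) (4/3 + δ), ω x ≠ 0) : False := by
  have hsign := isPreconnected_Ioo.pos_or_neg_of_ne_zero
    (hcont.mono (Ioo_subset_Icc_self.trans (Icc_subset_Icc (by norm_num) (by linarith [hδ.2]))))
    hne
  set x := min (4/3 + δ/2) (3/2)
  have hx : x ∈ Ioo (4/3) (4/3 + δ) :=
    ⟨lt_min (by linarith [hδ.1]) (by norm_num), (min_le_left _ _).trans_lt (by linarith [hδ.1])⟩
  have hx' : x ∈ Ioc (4/3 : ℝ) (3/2) := ⟨hx.1, min_le_right _ _⟩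
  have hx0 : 0 < x := by linarith [hx.1]
  have hray : ∀ θ ∈ Ioo (4/3/x) 1, x * θ ∈ Ioo (4/3) (4/3 + δ) := fun θ hθ =>
    ⟨(div_lt_iff₀' hx0).1 hθ.1, (mul_lt_of_lt_one_right hx0 hθ.2).trans hx.2⟩
  have hωx := heq x ⟨hx0.le, hx.2.le.trans (by linarith [hδ.2])⟩
  rcases hsign with hpos | hneg
  · rw [integral_kernel_mul_continuation hx' hext (continuous_kernel.intervalIntegrable _ _)
      fun θ hθ => by simp only [if_pos (hpos _ (hray θ hθ)), mul_one]] at hωx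
    have htail : 0 < ∫ θ in (4/3/x)..1, kernel θ := by
      refine intervalIntegral.intervalIntegral_pos_of_pos_on
        (continuous_kernel.intervalIntegrable _ _)
        (fun θ hθ => kernel_pos ⟨lt_of_le_of_lt ?_ hθ.1, hθ.2⟩) ?_
      · rw [le_div_iff₀ hx0]; linarith [hx'.2]
      · rw [div_lt_one hx0]; exact hx.1
    have hωx' : ω x = -(x^2 * ∫ θ in (4/3/x)..1, kernel θ) := by
      rw [hωx]; field_simp; ring
    linarith [hpos x hx, mul_pos (pow_pos hx0 2) htail]
  · rw [integral_kernel_mul_continuation hx' hext (intervalIntegrable_const (c := (0 : ℝ)))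
      fun θ hθ => by simp only [if_neg (not_lt.2 (hneg _ (hray θ hθ)).le), mul_zero]] at hωx
    refine hne x hx ?_
    rw [hωx, intervalIntegral.integral_const]
    field_simp
    ring

theorem degenerate_solution_exists :
    ∃ (Γ k : ℝ) (K : ℝ → ℝ) (x₁ x₂ : ℝ) (ω : ℝ → ℝ),
      0 < Γ ∧ 0 < k ∧
      ContinuousOn K (Icc 0 1) ∧
      (∀ θ ∈ Icc (0:ℝ) 1, 0 ≤ K θ) ∧
      K 0 = 0 ∧
      HasDerivWithinAt K 0 (Icc 0 1) 0 ∧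
      Tendsto (fun θ => K θ / Real.sqrt (1 - θ)) (nhdsWithin 1 (Iio 1)) (nhds k) ∧
      0 < x₁ ∧ x₁ < x₂ ∧
      ContinuousOn ω (Icc 0 x₂) ∧
      (∀ x ∈ Ico (0:ℝ) x₁, 0 < ω x) ∧ ω x₁ = 0 ∧
      (∀ x ∈ Ioo x₁ x₂, ω x < 0) ∧ ω x₂ = 0 ∧
      (∀ x ∈ Icc (0:ℝ) x₂,
        ω x = Γ - x ^ 2 * ∫ θ in (0:ℝ)..1, K θ * (if 0 < ω (x * θ) then (1:ℝ) else 0)) ∧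
      (∀ ε > (0:ℝ), ¬ ∃ ω' : ℝ → ℝ,
        ContinuousOn ω' (Icc 0 (x₂ + ε)) ∧
        (∀ x ∈ Icc (0:ℝ) x₂, ω' x = ω x) ∧
        (∀ x ∈ Icc (0:ℝ) (x₂ + ε),
          ω' x = Γ - x ^ 2 * ∫ θ in (0:ℝ)..1, K θ * (if 0 < ω' (x * θ) then (1:ℝ) else 0)) ∧
        (∃ δ ∈ Ioc (0:ℝ) ε, ∀ x ∈ Ioo x₂ (x₂ + δ), ω' x ≠ 0)) := by
  refine ⟨1, 12, kernel, 1, 4/3, solution, one_pos, by norm_num, continuous_kernel.continuousOn,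
    fun θ _ => kernel_nonneg θ, by norm_num [kernel], hasDerivAt_kernel_zero.hasDerivWithinAt,
    tendsto_kernel_div_sqrt, one_pos, by norm_num, continuous_solution.continuousOn,
    fun _ => solution_pos, solution_one, fun _ => solution_neg, solution_four_thirds,
    fun _ => solution_eq_integral, ?_⟩
  rintro ε - ⟨ω', hcont, hext, heq, δ, hδ, hne⟩
  exact solution_not_continuable hcont hext heq hδ hne
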